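/- Let G be a 2-connected matching-covered bipartite graph with bipartition X ⊔ Y, and let T ⊆ X be a tight acceptable set (|N_G(T)| = |T| + 1). Set S = Y \ N_G(T). Then S is a tight acceptable subset of Y, N_G(S) = X \ T, and for any non-edge (x,y) with x ∈ T and y ∉ N_G(T), one has y ∈ S and x ∉ N_G(S). -/

import Mathlib

/-!
Every vertex `x ∈ X \ T` has a neighbour inside the connected graph on `(X \ T) ⊔ (Y \ N(T))`
(it has at least the two ends of an edge), and that neighbour lies in `Y \ N(T)` by bipartiteness;
conversely no vertex of `Y \ N(T)` sees `T`. Hence `N(Y \ N(T)) = X \ T`, so passing from `T` to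
`S = Y \ N(T)` just swaps the roles of the two sides `T ⊔ N(T)` and `(X \ T) ⊔ S`, and every
claim follows from the corresponding property of `T` together with `|X| = |Y|`.
-/

attribute [local instance] Classical.propDecidable

/-- `X ⊔ Y` is a bipartition of the graph `G`. -/
def IsBipartition {V : Type*} (G : SimpleGraph V) [Fintype V] (X Y : Finset V) : Prop :=
  Disjoint X Y ∧ X ∪ Y = Finset.univ ∧
    ∀ x y : V, G.Adj x y → (x ∈ X ∧ y ∈ Y) ∨ (x ∈ Y ∧ y ∈ X)

/-- `G` is connected and every edge of `G` lies in a perfect matching. -/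
def MatchingCovered {V : Type*} (G : SimpleGraph V) : Prop :=
  G.Connected ∧ ∀ e ∈ G.edgeSet, ∃ M : G.Subgraph, M.IsPerfectMatching ∧ e ∈ M.edgeSet

/-- `G` is connected and remains connected after deleting any single vertex. -/
def TwoConnected {V : Type*} (G : SimpleGraph V) : Prop :=
  G.Connected ∧ ∀ v : V, (G.induce {u : V | u ≠ v}).Connected

/-- The neighborhood of the vertex set `A` in `G`. -/
noncomputable def nbhd {V : Type*} [Fintype V] (G : SimpleGraph V) (A : Finset V) : Finset V :=
  Finset.univ.filter (fun y => ∃ x ∈ A, G.Adj x y)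

/-- `T` is a tight subset: `|N_G(T)| = |T| + 1`. -/
def Tight {V : Type*} [Fintype V] (G : SimpleGraph V) (T : Finset V) : Prop :=
  (nbhd G T).card = T.card + 1

/-- `T ⊆ X` is an acceptable set of the bipartite graph `G` with bipartition `X ⊔ Y`:
the graph induced by the edges between `T` and `N_G(T)` is connected, and the induced
subgraph on `(X \ T) ⊔ (Y \ N_G(T))` is connected with at least one edge. -/
def Acceptable {V : Type*} [Fintype V] (G : SimpleGraph V) (X Y T : Finset V) : Prop :=
  T.Nonempty ∧ T ⊆ X ∧
    (G.induce (↑(T ∪ nbhd G T) : Set V)).Connected ∧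
    (G.induce (↑((X \ T) ∪ (Y \ nbhd G T)) : Set V)).Connected ∧
    ∃ x ∈ X \ T, ∃ y ∈ Y \ nbhd G T, G.Adj x y

lemma SimpleGraph.Preconnected.exists_adj_mem_of_induce {V : Type*} {G : SimpleGraph V}
    {s : Set V} (h : (G.induce s).Preconnected) (hs : s.Nontrivial) {v : V} (hv : v ∈ s) :
    ∃ w ∈ s, G.Adj v w := by
  have := hs.coe_sort
  obtain ⟨⟨w, hw⟩, hvw⟩ := h.exists_adj_of_nontrivial ⟨v, hv⟩
  exact ⟨w, hw, hvw⟩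

lemma mem_nbhd {V : Type*} [Fintype V] {G : SimpleGraph V} {A : Finset V} {y : V} :
    y ∈ nbhd G A ↔ ∃ x ∈ A, G.Adj x y := by
  simp [nbhd]

lemma Tight.sdiff_nbhd {V : Type*} [Fintype V] {G : SimpleGraph V} {X Y T : Finset V}
    (hTt : Tight G T) (hXY : X.card = Y.card) (hTX : T ⊆ X) (hNY : nbhd G T ⊆ Y)
    (hN : nbhd G (Y \ nbhd G T) = X \ T) : Tight G (Y \ nbhd G T) := by
  unfold Tight at hTt ⊢
  have hle := Finset.card_le_card hNY
  rw [hN, Finset.card_sdiff_of_subset hTX, Finset.card_sdiff_of_subset hNY, hTt]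
  omega

namespace IsBipartition

variable {V : Type*} [Fintype V] {G : SimpleGraph V} {X Y : Finset V}

lemma symm (h : IsBipartition G X Y) : IsBipartition G Y X := by
  obtain ⟨hdisj, huniv, hadj⟩ := h
  exact ⟨hdisj.symm, by rw [Finset.union_comm, huniv], fun x y hxy => (hadj x y hxy).symm⟩

lemma mem_right_of_adj (h : IsBipartition G X Y) {x y : V} (hx : x ∈ X) (hxy : G.Adj x y) :
    y ∈ Y :=
  (h.2.2 x y hxy).elim And.right fun hyx => absurd hx (Finset.disjoint_right.mp h.1 hyx.1)

lemma nbhd_subset (h : IsBipartition G X Y) {T : Finset V} (hTX : T ⊆ X) : nbhd G T ⊆ Y := by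
  intro y hy
  obtain ⟨x, hxT, hxy⟩ := mem_nbhd.mp hy
  exact h.mem_right_of_adj (hTX hxT) hxy

lemma nbhd_sdiff_nbhd_subset (h : IsBipartition G X Y) (T : Finset V) :
    nbhd G (Y \ nbhd G T) ⊆ X \ T := by
  intro x hx
  obtain ⟨y, hyS, hyx⟩ := mem_nbhd.mp hx
  obtain ⟨hyY, hyN⟩ := Finset.mem_sdiff.mp hyS
  exact Finset.mem_sdiff.mpr
    ⟨h.symm.mem_right_of_adj hyY hyx, fun hxT => hyN (mem_nbhd.mpr ⟨x, hxT, hyx.symm⟩)⟩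

lemma nbhd_sdiff_nbhd_eq (h : IsBipartition G X Y) {T : Finset V}
    (hconn : (G.induce (↑((X \ T) ∪ (Y \ nbhd G T)) : Set V)).Preconnected)
    (hnt : (↑((X \ T) ∪ (Y \ nbhd G T)) : Set V).Nontrivial) :
    nbhd G (Y \ nbhd G T) = X \ T := by
  refine (h.nbhd_sdiff_nbhd_subset T).antisymm fun x hx => ?_
  have hxX := (Finset.mem_sdiff.mp hx).1
  obtain ⟨w, hw, hxw⟩ := hconn.exists_adj_mem_of_induce hnt (Finset.mem_union_left _ hx)
  have hwY := h.mem_right_of_adj hxX hxw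
  have hwX : w ∉ X := Finset.disjoint_right.mp h.1 hwY
  have hwS : w ∈ Y \ nbhd G T := by
    simpa [hwX] using hw
  exact mem_nbhd.mpr ⟨w, hwS, hxw.symm⟩

end IsBipartition

theorem stmt11_general {V : Type*} [Fintype V] (G : SimpleGraph V) (X Y : Finset V) (n : ℕ)
    (hbip : IsBipartition G X Y) (hX : X.card = n) (hY : Y.card = n)
    (T : Finset V) (hT : Acceptable G X Y T) (hTt : Tight G T) :
    Tight G (Y \ nbhd G T) ∧ Acceptable G Y X (Y \ nbhd G T) ∧
      nbhd G (Y \ nbhd G T) = X \ T ∧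
      ∀ x ∈ T, ∀ y ∈ Y, y ∉ nbhd G T → ¬ G.Adj x y →
        y ∈ Y \ nbhd G T ∧ x ∉ nbhd G (Y \ nbhd G T) := by
  obtain ⟨-, hTX, hconnT, hconnS, x₀, hx₀, y₀, hy₀, hx₀y₀⟩ := hT
  have hNY := hbip.nbhd_subset hTX
  have hN : nbhd G (Y \ nbhd G T) = X \ T :=
    hbip.nbhd_sdiff_nbhd_eq hconnS.preconnected
      ⟨x₀, Finset.mem_union_left _ hx₀, y₀, Finset.mem_union_right _ hy₀, hx₀y₀.ne⟩
  have hYS : Y \ (Y \ nbhd G T) = nbhd G T := Finset.sdiff_sdiff_eq_self hNY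
  have hXN : X \ nbhd G (Y \ nbhd G T) = T := by rw [hN, Finset.sdiff_sdiff_eq_self hTX]
  obtain ⟨w, hw⟩ : (nbhd G T).Nonempty := Finset.card_pos.mp (by rw [hTt]; omega)
  obtain ⟨t, htT, htw⟩ := mem_nbhd.mp hw
  refine ⟨hTt.sdiff_nbhd (hX.trans hY.symm) hTX hNY hN,
    ⟨⟨y₀, hy₀⟩, Finset.sdiff_subset, ?_, ?_, w, hYS.symm ▸ hw, t, hXN.symm ▸ htT, htw.symm⟩, hN, ?_⟩
  · rw [hN, Finset.union_comm]
    exact hconnS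
  · rw [hYS, hXN, Finset.union_comm]
    exact hconnT
  · intro x hxT y hyY hyN _
    exact ⟨Finset.mem_sdiff.mpr ⟨hyY, hyN⟩, by simp [hN, hxT]⟩

theorem stmt11 {V : Type*} [Fintype V] (G : SimpleGraph V) (X Y : Finset V) (n : ℕ)
    (hbip : IsBipartition G X Y) (hX : X.card = n) (hY : Y.card = n)
    (hmc : MatchingCovered G) (h2 : TwoConnected G)
    (T : Finset V) (hT : Acceptable G X Y T) (hTt : Tight G T) :
    Tight G (Y \ nbhd G T) ∧ Acceptable G Y X (Y \ nbhd G T) ∧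
      nbhd G (Y \ nbhd G T) = X \ T ∧
      ∀ x ∈ T, ∀ y ∈ Y, y ∉ nbhd G T → ¬ G.Adj x y →
        y ∈ Y \ nbhd G T ∧ x ∉ nbhd G (Y \ nbhd G T) :=
  stmt11_general G X Y n hbip hX hY T hT hTt
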